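/- arXiv:1808.08811 — 2 statements merged into one kernel-verified Lean document; each statement's English description precedes it below -/
import Mathlib

section
/- Point 1 of the main lemma: under the contraction condition, for each t ∈ {1,…,n} the function g_t (defined by g_t(x_1,…,x_t) = E[f(X_1,…,X_n) | X_1 = x_1,…,X_t = x_t], i.e. the conditional expectation functional) is separately Lipschitz and satisfies |g_t(x_1,…,x_t) − g_t(x'_1,…,x'_t)| ≤ Σ_{i=1}^{t−1} d(x_i, x'_i) + K_{n−t}(ρ) d(x_t, x'_t) for all x_1,…,x_t, x'_1,…,x'_t in X. -/
open MeasureTheory ProbabilityTheory Finset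

/-- `K_t(ρ) = (1 - ρ^(t+1))/(1 - ρ)`. -/
noncomputable def Kgeom (ρ : ℝ) (t : ℕ) : ℝ := (1 - ρ ^ (t + 1)) / (1 - ρ)

/-- Backward recursion defining the conditional expectation functionals:
`gAux Pε F n f k = g_{n-k}`, i.e. `gAux _ _ _ _ 0 = g_n = f` and
`g_{t-1}(x) = ∫ g_t(x_1,…,x_{t-1}, F_t(x_{t-1}, y)) Pε(dy)`.
Coordinates of the chain are `x 1, …, x n`.  For the Markov chain
`X_t = F_t(X_{t-1}, ε_t)` with the ε's i.i.d. of law `Pε` and independent of `X_1`,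
`gAux Pε F n f (n - t)` applied to `(X_1,…,X_t,…)` is a version of
`E[f(X_1,…,X_n) | X_1,…,X_t]`. -/
noncomputable def gAux {𝓧 𝓨 : Type*} [MeasurableSpace 𝓨] (Pε : Measure 𝓨)
    (F : ℕ → 𝓧 → 𝓨 → 𝓧) (n : ℕ) (f : (ℕ → 𝓧) → ℝ) : ℕ → (ℕ → 𝓧) → ℝ
  | 0 => f
  | (k + 1) => fun x =>
      ∫ y, gAux Pε F n f k (Function.update x (n - k) (F (n - k) (x (n - k - 1)) y)) ∂Pε

/-!
Backward induction on `t`. Since `g_n = f` and `g_{t-1}` averages `g_t` over its last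
coordinate `F_t(x_{t-1}, ε)`, integrating the bound for `g_t` and using the contraction
`E d(F_t(x, ε), F_t(x', ε)) ≤ ρ d(x, x')` turns the weight `K_{n-t}(ρ)` on `x_t` into the weight
`1 + ρ K_{n-t}(ρ) = K_{n-t+1}(ρ)` on `x_{t-1}`, the other coordinates keeping weight `1`.
-/

open Function

lemma Kgeom_zero {ρ : ℝ} (hρ1 : ρ < 1) : Kgeom ρ 0 = 1 := by
  rw [Kgeom, zero_add, pow_one, div_self (by linarith)]

lemma Kgeom_succ {ρ : ℝ} (hρ1 : ρ < 1) (k : ℕ) : Kgeom ρ (k + 1) = 1 + ρ * Kgeom ρ k := by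
  have h : 1 - ρ ≠ 0 := by linarith
  rw [Kgeom, Kgeom, mul_div_assoc', one_add_div h, div_left_inj' h]
  ring

lemma Kgeom_nonneg {ρ : ℝ} (hρ0 : 0 ≤ ρ) (hρ1 : ρ < 1) (k : ℕ) : 0 ≤ Kgeom ρ k :=
  div_nonneg (by linarith [pow_le_one₀ hρ0 hρ1.le (n := k + 1)]) (by linarith)

noncomputable def integrateLast {𝓧 𝓨 : Type*} [MeasurableSpace 𝓨]
    (Pε : Measure 𝓨) (G : 𝓧 → 𝓨 → 𝓧) (p : ℕ) (g : (ℕ → 𝓧) → ℝ) (x : ℕ → 𝓧) : ℝ :=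
  ∫ y, g (update x p (G (x (p - 1)) y)) ∂Pε

lemma gAux_succ {𝓧 𝓨 : Type*} [MeasurableSpace 𝓨] (Pε : Measure 𝓨) (F : ℕ → 𝓧 → 𝓨 → 𝓧)
    (n : ℕ) (f : (ℕ → 𝓧) → ℝ) (k : ℕ) :
    gAux Pε F n f (k + 1) = integrateLast Pε (F (n - k)) (n - k) (gAux Pε F n f k) :=
  rfl

lemma LipschitzWith.integrable_comp_of_integrable_dist {𝓧 𝓨 : Type*} [PseudoMetricSpace 𝓧]
    [MeasurableSpace 𝓧] [OpensMeasurableSpace 𝓧] [MeasurableSpace 𝓨] {Pε : Measure 𝓨}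
    [IsFiniteMeasure Pε] {K : NNReal} {φ : 𝓧 → ℝ} (hφ : LipschitzWith K φ) {h : 𝓨 → 𝓧}
    (hh : Measurable h) (y₀ : 𝓨) (hint : Integrable (fun y => dist (h y) (h y₀)) Pε) :
    Integrable (fun y => φ (h y)) Pε := by
  refine ((integrable_const |φ (h y₀)|).add (hint.const_mul K)).mono'
    (hφ.continuous.measurable.comp hh).aestronglyMeasurable (ae_of_all _ fun y => ?_)
  have hdist : |φ (h y) - φ (h y₀)| ≤ K * dist (h y) (h y₀) := by
    simpa only [Real.dist_eq] using hφ.dist_le_mul (h y) (h y₀)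
  simp only [Real.norm_eq_abs, Pi.add_apply]
  linarith [abs_sub_abs_le_abs_sub (φ (h y)) (φ (h y₀))]

section SeparatelyLipschitz

variable {𝓧 𝓨 : Type*} [MetricSpace 𝓧]

def SepLipschitzAt (p : ℕ) (K : ℝ) (g : (ℕ → 𝓧) → ℝ) : Prop :=
  ∀ x x' : ℕ → 𝓧, |g x - g x'| ≤ (∑ i ∈ Ico 1 p, dist (x i) (x' i)) + K * dist (x p) (x' p)

lemma sepLipschitzAt_of_sum_Icc {n : ℕ} (hn : 1 ≤ n) {f : (ℕ → 𝓧) → ℝ}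
    (hlip : ∀ x x', |f x - f x'| ≤ ∑ t ∈ Icc 1 n, dist (x t) (x' t)) :
    SepLipschitzAt n 1 f := by
  intro x x'
  rw [one_mul, ← sum_Ico_succ_top hn, Ico_add_one_right_eq_Icc]
  exact hlip x x'

namespace SepLipschitzAt

variable {p : ℕ} {K : ℝ} {g : (ℕ → 𝓧) → ℝ}

lemma abs_sub_update_le (hg : SepLipschitzAt p K g) (x x' : ℕ → 𝓧) (z z' : 𝓧) :
    |g (update x p z) - g (update x' p z')| ≤
      (∑ i ∈ Ico 1 p, dist (x i) (x' i)) + K * dist z z' := by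
  have hsum : ∑ i ∈ Ico 1 p, dist (update x p z i) (update x' p z' i) =
      ∑ i ∈ Ico 1 p, dist (x i) (x' i) :=
    sum_congr rfl fun i hi => by
      rw [update_of_ne (mem_Ico.1 hi).2.ne, update_of_ne (mem_Ico.1 hi).2.ne]
  simpa only [hsum, update_self] using hg (update x p z) (update x' p z')

lemma lipschitzWith_update (hg : SepLipschitzAt p K g) (hK : 0 ≤ K) (x : ℕ → 𝓧) :
    LipschitzWith K.toNNReal (fun z => g (update x p z)) :=
  LipschitzWith.of_dist_le_mul fun z z' => by
    simpa only [Real.coe_toNNReal _ hK, Real.dist_eq, dist_self, sum_const_zero, zero_add]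
      using hg.abs_sub_update_le x x z z'

variable [MeasurableSpace 𝓧] [OpensMeasurableSpace 𝓧] [MeasurableSpace 𝓨] {Pε : Measure 𝓨}
  [IsProbabilityMeasure Pε] {G : 𝓧 → 𝓨 → 𝓧} {ρ : ℝ}

lemma integrable_update (hg : SepLipschitzAt p K g) (hK : 0 ≤ K) (hG : Measurable (uncurry G))
    (hintH : ∀ a y₀, Integrable (fun y => dist (G a y) (G a y₀)) Pε) (x : ℕ → 𝓧) (a : 𝓧) :
    Integrable (fun y => g (update x p (G a y))) Pε :=
  have ⟨y₀⟩ := nonempty_of_isProbabilityMeasure Pε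
  (hg.lipschitzWith_update hK x).integrable_comp_of_integrable_dist
    (hG.comp (measurable_const.prodMk measurable_id)) y₀ (hintH a y₀)

/-- The coordinate `x (p - 1)` enters with weight `1` directly and with weight `K * ρ` through
the contraction of `G`. -/
lemma integrateLast (hg : SepLipschitzAt p K g) (hK : 0 ≤ K) (hp : 2 ≤ p)
    (hG : Measurable (uncurry G))
    (hcontract : ∀ a a', ∫ y, dist (G a y) (G a' y) ∂Pε ≤ ρ * dist a a')
    (hintc : ∀ a a', Integrable (fun y => dist (G a y) (G a' y)) Pε)
    (hintH : ∀ a y₀, Integrable (fun y => dist (G a y) (G a y₀)) Pε) :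
    SepLipschitzAt (p - 1) (1 + ρ * K) (integrateLast Pε G p g) := by
  intro x x'
  set a := x (p - 1)
  set a' := x' (p - 1)
  set S := ∑ i ∈ Ico 1 p, dist (x i) (x' i)
  have hu := hg.integrable_update hK hG hintH x a
  have hu' := hg.integrable_update hK hG hintH x' a'
  have hS : S = (∑ i ∈ Ico 1 (p - 1), dist (x i) (x' i)) + dist a a' := by
    rw [← sum_Ico_succ_top (by omega), Nat.sub_add_cancel (by omega)]
  calc _ = |∫ y, (g (update x p (G a y)) - g (update x' p (G a' y))) ∂Pε| := by
        rw [integral_sub hu hu']; rfl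
    _ ≤ ∫ y, (S + K * dist (G a y) (G a' y)) ∂Pε :=
        abs_integral_le_integral_abs.trans <| integral_mono (hu.sub hu').abs
          ((integrable_const S).add ((hintc a a').const_mul K))
          fun y => hg.abs_sub_update_le x x' _ _
    _ = S + K * ∫ y, dist (G a y) (G a' y) ∂Pε := by
        rw [integral_add (integrable_const S) ((hintc a a').const_mul K), integral_const,
          integral_const_mul, probReal_univ, one_smul]
    _ ≤ S + K * (ρ * dist a a') := by gcongr; exact hcontract a a'
    _ = (∑ i ∈ Ico 1 (p - 1), dist (x i) (x' i)) + (1 + ρ * K) * dist a a' := by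
        rw [hS]; ring

end SepLipschitzAt

end SeparatelyLipschitz

lemma gAux_sepLipschitzAt {𝓧 𝓨 : Type*} [MetricSpace 𝓧] [MeasurableSpace 𝓧]
    [OpensMeasurableSpace 𝓧] [MeasurableSpace 𝓨] {Pε : Measure 𝓨} [IsProbabilityMeasure Pε]
    {F : ℕ → 𝓧 → 𝓨 → 𝓧}
    (hmF : ∀ t, Measurable (uncurry (F t))) {ρ : ℝ} (hρ0 : 0 ≤ ρ) (hρ1 : ρ < 1)
    (hcontract : ∀ t x x', ∫ y, dist (F t x y) (F t x' y) ∂Pε ≤ ρ * dist x x')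
    (hintc : ∀ t x x', Integrable (fun y => dist (F t x y) (F t x' y)) Pε)
    (hintH : ∀ t x y₀, Integrable (fun y => dist (F t x y) (F t x y₀)) Pε)
    {n : ℕ} {f : (ℕ → 𝓧) → ℝ} (hlip : ∀ x x', |f x - f x'| ≤ ∑ t ∈ Icc 1 n, dist (x t) (x' t))
    {k : ℕ} (hk : k < n) :
    SepLipschitzAt (n - k) (Kgeom ρ k) (gAux Pε F n f k) := by
  induction k with
  | zero =>
    rw [Kgeom_zero hρ1]
    exact sepLipschitzAt_of_sum_Icc (by omega) hlip
  | succ k ih =>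
    rw [gAux_succ, Kgeom_succ hρ1, ← Nat.sub_sub]
    exact (ih (by omega)).integrateLast (Kgeom_nonneg hρ0 hρ1 k) (by omega) (hmF _)
      (hcontract _) (hintc _) (hintH _)

theorem gfun_separately_lipschitz_general
    {𝓧 : Type*} [MetricSpace 𝓧] [MeasurableSpace 𝓧] [BorelSpace 𝓧]
    {𝓨 : Type*} [MeasurableSpace 𝓨] (Pε : Measure 𝓨) [IsProbabilityMeasure Pε]
    (F : ℕ → 𝓧 → 𝓨 → 𝓧) (hmF : ∀ t, Measurable (Function.uncurry (F t)))
    (ρ : ℝ) (hρ0 : 0 ≤ ρ) (hρ1 : ρ < 1)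
    (hcontract : ∀ t x x', ∫ y, dist (F t x y) (F t x' y) ∂Pε ≤ ρ * dist x x')
    (hintc : ∀ t x x', Integrable (fun y => dist (F t x y) (F t x' y)) Pε)
    (hintH : ∀ t x y₀, Integrable (fun y => dist (F t x y) (F t x y₀)) Pε)
    (n : ℕ) (f : (ℕ → 𝓧) → ℝ)
    (hlip : ∀ x x', |f x - f x'| ≤ ∑ t ∈ Icc 1 n, dist (x t) (x' t)) :
    ∀ t, 1 ≤ t → t ≤ n → ∀ x x' : ℕ → 𝓧,
      |gAux Pε F n f (n - t) x - gAux Pε F n f (n - t) x'| ≤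
        (∑ i ∈ Ico 1 t, dist (x i) (x' i)) + Kgeom ρ (n - t) * dist (x t) (x' t) := by
  intro t ht1 htn x x'
  have h := gAux_sepLipschitzAt hmF hρ0 hρ1 hcontract hintc hintH hlip
    (k := n - t) (by omega) x x'
  rwa [Nat.sub_sub_self htn] at h

/-- Point 1 of the main lemma: each `g_t` is separately Lipschitz with
`|g_t(x_{1:t}) - g_t(x'_{1:t})| ≤ Σ_{i=1}^{t-1} d(x_i,x'_i) + K_{n-t}(ρ) d(x_t,x'_t)`. -/
theorem gfun_separately_lipschitz
    {Ω : Type*} [MeasurableSpace Ω] (μ : Measure Ω) [IsProbabilityMeasure μ]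
    {𝓧 : Type*} [MetricSpace 𝓧] [CompleteSpace 𝓧] [TopologicalSpace.SeparableSpace 𝓧]
    [MeasurableSpace 𝓧] [BorelSpace 𝓧]
    {𝓨 : Type*} [MetricSpace 𝓨] [CompleteSpace 𝓨] [TopologicalSpace.SeparableSpace 𝓨]
    [MeasurableSpace 𝓨] [BorelSpace 𝓨]
    (X : ℕ → Ω → 𝓧) (ε : ℕ → Ω → 𝓨) (Pε : Measure 𝓨) [IsProbabilityMeasure Pε]
    (hmX1 : Measurable (X 1)) (hmε : ∀ t, Measurable (ε t))
    (hlaw : ∀ t, 2 ≤ t → μ.map (ε t) = Pε)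
    (hiid : iIndepFun (m := fun _ : {t : ℕ // 2 ≤ t} => (inferInstance : MeasurableSpace 𝓨))
      (fun t : {t : ℕ // 2 ≤ t} => ε t.1) μ)
    (hindep : IndepFun (X 1) (fun ω => fun t : {t : ℕ // 2 ≤ t} => ε t.1 ω) μ)
    (F : ℕ → 𝓧 → 𝓨 → 𝓧) (hmF : ∀ t, Measurable (Function.uncurry (F t)))
    (hchain : ∀ t, 2 ≤ t → ∀ ω, X t ω = F t (X (t - 1) ω) (ε t ω))
    (ρ : ℝ) (hρ0 : 0 ≤ ρ) (hρ1 : ρ < 1)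
    (hcontract : ∀ t x x', ∫ y, dist (F t x y) (F t x' y) ∂Pε ≤ ρ * dist x x')
    (hintc : ∀ t x x', Integrable (fun y => dist (F t x y) (F t x' y)) Pε)
    (hintH : ∀ t x y₀, Integrable (fun y => dist (F t x y) (F t x y₀)) Pε)
    (n : ℕ) (hn : 1 ≤ n)
    (f : (ℕ → 𝓧) → ℝ) (hmf : Measurable f)
    (hlip : ∀ x x', |f x - f x'| ≤ ∑ t ∈ Icc 1 n, dist (x t) (x' t)) :
    ∀ t, 1 ≤ t → t ≤ n → ∀ x x' : ℕ → 𝓧,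
      |gAux Pε F n f (n - t) x - gAux Pε F n f (n - t) x'| ≤
        (∑ i ∈ Ico 1 t, dist (x i) (x' i)) + Kgeom ρ (n - t) * dist (x t) (x' t) :=
  gfun_separately_lipschitz_general Pε F hmF ρ hρ0 hρ1 hcontract hintc hintH n f hlip
end

section
/- Point 2 (first part) of the main lemma: under the contraction condition, the first martingale difference satisfies |d_1| ≤ K_{n−1}(ρ) G_{X_1}(X_1) almost surely, where G_{X_1}(x) = ∫ d(x, x') P_{X_1}(dx') and P_{X_1} is the distribution of X_1. -/
/-!
Backward induction on `k`: `g_{n-k}` depends only on `x_1, …, x_{n-k}`, is 1-Lipschitz in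
each of `x_1, …, x_{n-k-1}` and `(1 + ρ + ⋯ + ρ^k)`-Lipschitz in `x_{n-k}`. Indeed, integrating
`x_{n-k} = F_{n-k}(x_{n-k-1}, y)` out against `Pε`, the contraction turns a constant `L` in
`x_{n-k}` into `ρ L` in `x_{n-k-1}`, which adds to the constant 1 already there. For `k = n - 1`,
`g_1` is a `K_{n-1}(ρ)`-Lipschitz function of `x_1` alone, and
`|g_1(X_1) - E g_1(X_1)| ≤ ∫ |g_1(X_1) - g_1(x')| P_{X_1}(dx')` gives the bound.
-/

open MeasureTheory ProbabilityTheory Finset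

theorem Kgeom_eq_sum_range {ρ : ℝ} (hρ : ρ ≠ 1) (t : ℕ) :
    Kgeom ρ t = ∑ i ∈ range (t + 1), ρ ^ i := by
  rw [Kgeom, geom_sum_eq hρ, ← neg_div_neg_eq, neg_sub, neg_sub]

theorem sum_Icc_one_sub_one_add {a : ℕ → ℝ} {m : ℕ} (hm : 1 ≤ m) :
    ∑ t ∈ Icc 1 (m - 1), a t + a m = ∑ t ∈ Icc 1 m, a t := by
  obtain ⟨j, rfl⟩ := Nat.exists_eq_add_of_le' hm
  rw [Nat.add_sub_cancel, sum_Icc_succ_top (by omega)]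

theorem abs_integral_sub_integral_le_of_abs_sub_le {α : Type*} [MeasurableSpace α]
    {μ : Measure α} {A B h : α → ℝ} (hAB : AEStronglyMeasurable (fun a => A a - B a) μ)
    (hh : Integrable h μ) (hle : ∀ᵐ a ∂μ, |A a - B a| ≤ h a) :
    |∫ a, A a ∂μ - ∫ a, B a ∂μ| ≤ ∫ a, h a ∂μ := by
  have hint : Integrable (fun a => A a - B a) μ :=
    hh.mono' hAB (by simpa only [Real.norm_eq_abs] using hle)
  by_cases hA : Integrable A μ
  · have hB : Integrable B μ :=
      (hA.sub hint).congr (.of_forall fun a => sub_sub_cancel (A a) (B a))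
    rw [← integral_sub hA hB]
    exact abs_integral_le_integral_abs.trans (integral_mono_ae hint.abs hh hle)
  · have hB : ¬Integrable B μ := fun hB =>
      hA <| (hB.add hint).congr (.of_forall fun a => add_sub_cancel (B a) (A a))
    -- both integrals take the junk value `0`
    rw [integral_undef hA, integral_undef hB, sub_zero, abs_zero]
    exact integral_nonneg_of_ae (hle.mono fun a ha => (abs_nonneg _).trans ha)

theorem abs_sub_integral_comp_le {Ω 𝓧 : Type*} [MeasurableSpace Ω] {μ : Measure Ω}
    [IsProbabilityMeasure μ] [PseudoMetricSpace 𝓧] [MeasurableSpace 𝓧] {G : 𝓧 → ℝ}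
    {Y : Ω → 𝓧} {K : ℝ} (hG : Measurable G) (hY : Measurable Y)
    (hGK : ∀ a b, |G a - G b| ≤ K * dist a b) (ω : Ω)
    (hint : Integrable (fun ω' => dist (Y ω) (Y ω')) μ) :
    |G (Y ω) - ∫ ω', G (Y ω') ∂μ| ≤ K * ∫ ω', dist (Y ω) (Y ω') ∂μ := by
  have h := abs_integral_sub_integral_le_of_abs_sub_le (μ := μ) (A := fun _ => G (Y ω))
    (B := fun ω' => G (Y ω')) ((hG.comp hY).const_sub _).aestronglyMeasurable
    (hint.const_mul K) (.of_forall fun _ => hGK _ _)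
  rwa [integral_const, probReal_univ, one_smul, integral_const_mul] at h

section BackwardRecursion

variable {𝓧 𝓨 : Type*}

-- `gAux Pε F n f (k + 1) x` is by definition
-- `∫ y, gAux Pε F n f k (updateStep F (n - k) x y) ∂Pε`.
def updateStep (F : ℕ → 𝓧 → 𝓨 → 𝓧) (m : ℕ) (x : ℕ → 𝓧) (y : 𝓨) : ℕ → 𝓧 :=
  Function.update x m (F m (x (m - 1)) y)

theorem measurable_updateStep [MeasurableSpace 𝓧] [MeasurableSpace 𝓨] {F : ℕ → 𝓧 → 𝓨 → 𝓧}
    {m : ℕ} (hF : Measurable (Function.uncurry (F m))) :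
    Measurable (Function.uncurry (updateStep F m)) := by
  have hstep : Measurable fun p : (ℕ → 𝓧) × 𝓨 => F m (p.1 (m - 1)) p.2 :=
    hF.comp (f := fun p : (ℕ → 𝓧) × 𝓨 => (p.1 (m - 1), p.2))
      (measurable_fst.eval.prodMk measurable_snd)
  exact measurable_update'.comp (measurable_fst.prodMk hstep)

theorem measurable_gAux [MeasurableSpace 𝓧] [MeasurableSpace 𝓨] {Pε : Measure 𝓨}
    [SFinite Pε] {F : ℕ → 𝓧 → 𝓨 → 𝓧} {n : ℕ} {f : (ℕ → 𝓧) → ℝ}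
    (hmF : ∀ t, Measurable (Function.uncurry (F t))) (hmf : Measurable f) :
    ∀ k, Measurable (gAux Pε F n f k)
  | 0 => hmf
  | k + 1 =>
    (((measurable_gAux hmF hmf k).comp (measurable_updateStep (hmF (n - k)))
      ).stronglyMeasurable.integral_prod_right' (ν := Pε)).measurable

variable [PseudoMetricSpace 𝓧]

/-- `h` depends only on the coordinates `1, …, m`; it is 1-Lipschitz in each of the first
`m - 1` and `L`-Lipschitz in the last. -/
def LipschitzUpTo (m : ℕ) (L : ℝ) (h : (ℕ → 𝓧) → ℝ) : Prop :=
  ∀ x x', |h x - h x'| ≤ ∑ t ∈ Icc 1 (m - 1), dist (x t) (x' t) + L * dist (x m) (x' m)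

theorem lipschitzUpTo_of_abs_sub_le {n : ℕ} (hn : 1 ≤ n) {f : (ℕ → 𝓧) → ℝ}
    (hlip : ∀ x x', |f x - f x'| ≤ ∑ t ∈ Icc 1 n, dist (x t) (x' t)) :
    LipschitzUpTo n 1 f := fun x x' => by
  rw [one_mul, sum_Icc_one_sub_one_add hn]
  exact hlip x x'

theorem LipschitzUpTo.eq_const_apply_one {K : ℝ} {h : (ℕ → 𝓧) → ℝ} (hh : LipschitzUpTo 1 K h)
    (x : ℕ → 𝓧) : h x = h fun _ => x 1 := by
  simpa [sub_eq_zero] using hh x fun _ => x 1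

theorem LipschitzUpTo.integral_updateStep [MeasurableSpace 𝓧] [MeasurableSpace 𝓨]
    {Pε : Measure 𝓨} [IsProbabilityMeasure Pε] {F : ℕ → 𝓧 → 𝓨 → 𝓧} {m : ℕ} {ρ L : ℝ}
    {h : (ℕ → 𝓧) → ℝ} (hh : LipschitzUpTo m L h) (hm : 2 ≤ m) (hL : 0 ≤ L)
    (hmh : Measurable h) (hmF : Measurable (Function.uncurry (F m)))
    (hcontract : ∀ x x', ∫ y, dist (F m x y) (F m x' y) ∂Pε ≤ ρ * dist x x')
    (hintc : ∀ x x', Integrable (fun y => dist (F m x y) (F m x' y)) Pε) :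
    LipschitzUpTo (m - 1) (ρ * L + 1) fun x => ∫ y, h (updateStep F m x y) ∂Pε := by
  intro x x'
  set C := ∑ t ∈ Icc 1 (m - 1), dist (x t) (x' t)
  have hpoint : ∀ y, |h (updateStep F m x y) - h (updateStep F m x' y)| ≤
      C + L * dist (F m (x (m - 1)) y) (F m (x' (m - 1)) y) := fun y => by
    have hlow : ∑ t ∈ Icc 1 (m - 1), dist (updateStep F m x y t) (updateStep F m x' y t) = C :=
      sum_congr rfl fun t ht => by
        have htm : t ≠ m := by grind
        simp only [updateStep, Function.update_of_ne htm]
    have := hh (updateStep F m x y) (updateStep F m x' y)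
    rwa [hlow, updateStep, updateStep, Function.update_self, Function.update_self] at this
  have hmeas : Measurable fun y => h (updateStep F m x y) - h (updateStep F m x' y) :=
    (hmh.comp ((measurable_updateStep hmF).comp measurable_prodMk_left)).sub
      (hmh.comp ((measurable_updateStep hmF).comp measurable_prodMk_left))
  calc |∫ y, h (updateStep F m x y) ∂Pε - ∫ y, h (updateStep F m x' y) ∂Pε|
      ≤ ∫ y, (C + L * dist (F m (x (m - 1)) y) (F m (x' (m - 1)) y)) ∂Pε :=
        abs_integral_sub_integral_le_of_abs_sub_le hmeas.aestronglyMeasurable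
          ((integrable_const C).add ((hintc _ _).const_mul L)) (.of_forall hpoint)
    _ = C + L * ∫ y, dist (F m (x (m - 1)) y) (F m (x' (m - 1)) y) ∂Pε := by
        rw [integral_add (integrable_const C) ((hintc _ _).const_mul L), integral_const,
          integral_const_mul, probReal_univ, one_smul]
    _ ≤ C + L * (ρ * dist (x (m - 1)) (x' (m - 1))) := by gcongr; exact hcontract _ _
    _ = ∑ t ∈ Icc 1 (m - 1 - 1), dist (x t) (x' t) +
          (ρ * L + 1) * dist (x (m - 1)) (x' (m - 1)) := by
        rw [show C = _ from (sum_Icc_one_sub_one_add (by omega : 1 ≤ m - 1)).symm]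
        ring

theorem lipschitzUpTo_gAux [MeasurableSpace 𝓧] [MeasurableSpace 𝓨] {Pε : Measure 𝓨}
    [IsProbabilityMeasure Pε] {F : ℕ → 𝓧 → 𝓨 → 𝓧} {n : ℕ} {f : (ℕ → 𝓧) → ℝ} {ρ : ℝ}
    (hmF : ∀ t, Measurable (Function.uncurry (F t))) (hmf : Measurable f) (hρ0 : 0 ≤ ρ)
    (hcontract : ∀ t x x', ∫ y, dist (F t x y) (F t x' y) ∂Pε ≤ ρ * dist x x')
    (hintc : ∀ t x x', Integrable (fun y => dist (F t x y) (F t x' y)) Pε)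
    (hlip : ∀ x x', |f x - f x'| ≤ ∑ t ∈ Icc 1 n, dist (x t) (x' t)) :
    ∀ k, k + 1 ≤ n → LipschitzUpTo (n - k) (∑ i ∈ range (k + 1), ρ ^ i) (gAux Pε F n f k)
  | 0, hn => by simpa [gAux] using lipschitzUpTo_of_abs_sub_le hn hlip
  | k + 1, hk => by
    have := (lipschitzUpTo_gAux hmF hmf hρ0 hcontract hintc hlip k (by omega)).integral_updateStep
      (by omega) (sum_nonneg fun i _ => pow_nonneg hρ0 i) (measurable_gAux hmF hmf k) (hmF _)
      (hcontract _) (hintc _)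
    rwa [← geom_sum_succ, show n - k - 1 = n - (k + 1) by omega] at this

end BackwardRecursion

theorem first_martingale_difference_bound_general
    {Ω : Type*} [MeasurableSpace Ω] (μ : Measure Ω) [IsProbabilityMeasure μ]
    {𝓧 : Type*} [MetricSpace 𝓧] [MeasurableSpace 𝓧] {𝓨 : Type*} [MeasurableSpace 𝓨]
    (X : ℕ → Ω → 𝓧) (Pε : Measure 𝓨) [IsProbabilityMeasure Pε] (hmX1 : Measurable (X 1))
    (F : ℕ → 𝓧 → 𝓨 → 𝓧) (hmF : ∀ t, Measurable (Function.uncurry (F t)))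
    (ρ : ℝ) (hρ0 : 0 ≤ ρ) (hρ1 : ρ < 1)
    (hcontract : ∀ t x x', ∫ y, dist (F t x y) (F t x' y) ∂Pε ≤ ρ * dist x x')
    (hintc : ∀ t x x', Integrable (fun y => dist (F t x y) (F t x' y)) Pε)
    (hintG : ∀ x, Integrable (fun ω => dist x (X 1 ω)) μ)
    (n : ℕ) (hn : 1 ≤ n)
    (f : (ℕ → 𝓧) → ℝ) (hmf : Measurable f)
    (hlip : ∀ x x', |f x - f x'| ≤ ∑ t ∈ Icc 1 n, dist (x t) (x' t)) :
    ∀ᵐ ω ∂μ,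
      |gAux Pε F n f (n - 1) (fun i => X i ω) -
          ∫ ω', gAux Pε F n f (n - 1) (fun i => X i ω') ∂μ| ≤
        Kgeom ρ (n - 1) * ∫ ω', dist (X 1 ω) (X 1 ω') ∂μ := by
  set g := gAux Pε F n f (n - 1)
  have hg : LipschitzUpTo 1 (Kgeom ρ (n - 1)) g := by
    have := lipschitzUpTo_gAux hmF hmf hρ0 hcontract hintc hlip (n - 1) (by omega)
    rwa [Nat.sub_sub_self hn, ← Kgeom_eq_sum_range hρ1.ne] at this
  have hmG : Measurable fun a : 𝓧 => g fun _ => a :=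
    (measurable_gAux hmF hmf _).comp (measurable_pi_lambda _ fun _ => measurable_id)
  refine .of_forall fun ω => ?_
  simp only [hg.eq_const_apply_one (fun i => X i _)]
  exact abs_sub_integral_comp_le hmG hmX1 (fun a b => by simpa using hg (fun _ => a) fun _ => b)
    ω (hintG _)

/-- Point 2 (first part) of the main lemma: almost surely
`|d_1| ≤ K_{n-1}(ρ) G_{X_1}(X_1)` where `d_1 = g_1(X_1) - E[g_1(X_1)]` and
`G_{X_1}(x) = ∫ d(x, x') P_{X_1}(dx')`. -/
theorem first_martingale_difference_bound
    {Ω : Type*} [MeasurableSpace Ω] (μ : Measure Ω) [IsProbabilityMeasure μ]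
    {𝓧 : Type*} [MetricSpace 𝓧] [CompleteSpace 𝓧] [TopologicalSpace.SeparableSpace 𝓧]
    [MeasurableSpace 𝓧] [BorelSpace 𝓧]
    {𝓨 : Type*} [MetricSpace 𝓨] [CompleteSpace 𝓨] [TopologicalSpace.SeparableSpace 𝓨]
    [MeasurableSpace 𝓨] [BorelSpace 𝓨]
    (X : ℕ → Ω → 𝓧) (ε : ℕ → Ω → 𝓨) (Pε : Measure 𝓨) [IsProbabilityMeasure Pε]
    (hmX1 : Measurable (X 1)) (hmε : ∀ t, Measurable (ε t))
    (hlaw : ∀ t, 2 ≤ t → μ.map (ε t) = Pε)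
    (hiid : iIndepFun
      (fun t : {t : ℕ // 2 ≤ t} => ε t.1) μ)
    (hindep : IndepFun (X 1) (fun ω => fun t : {t : ℕ // 2 ≤ t} => ε t.1 ω) μ)
    (F : ℕ → 𝓧 → 𝓨 → 𝓧) (hmF : ∀ t, Measurable (Function.uncurry (F t)))
    (hchain : ∀ t, 2 ≤ t → ∀ ω, X t ω = F t (X (t - 1) ω) (ε t ω))
    (ρ : ℝ) (hρ0 : 0 ≤ ρ) (hρ1 : ρ < 1)
    (hcontract : ∀ t x x', ∫ y, dist (F t x y) (F t x' y) ∂Pε ≤ ρ * dist x x')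
    (hintc : ∀ t x x', Integrable (fun y => dist (F t x y) (F t x' y)) Pε)
    (hintH : ∀ t x y₀, Integrable (fun y => dist (F t x y) (F t x y₀)) Pε)
    (hintG : ∀ x, Integrable (fun ω => dist x (X 1 ω)) μ)
    (n : ℕ) (hn : 1 ≤ n)
    (f : (ℕ → 𝓧) → ℝ) (hmf : Measurable f)
    (hlip : ∀ x x', |f x - f x'| ≤ ∑ t ∈ Icc 1 n, dist (x t) (x' t)) :
    ∀ᵐ ω ∂μ,
      |gAux Pε F n f (n - 1) (fun i => X i ω) -
          ∫ ω', gAux Pε F n f (n - 1) (fun i => X i ω') ∂μ| ≤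
        Kgeom ρ (n - 1) * ∫ ω', dist (X 1 ω) (X 1 ω') ∂μ :=
  first_martingale_difference_bound_general μ X Pε hmX1 F hmF ρ hρ0 hρ1 hcontract hintc hintG n hn f
    hmf hlip
end
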